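/- For all u, v ∈ V (products taken in the free algebra V): A*_ℓ(uv) = K(u)·A*_ℓ(v) + A*_ℓ(u)·v; B*_ℓ(uv) = K⁻¹(u)·B*_ℓ(v) + B*_ℓ(u)·v; A*_r(uv) = u·A*_r(v) + A*_r(u)·K(v); B*_r(uv) = u·B*_r(v) + B*_r(u)·K⁻¹(v). In particular, A*_ℓ is a (K,I)-derivation, B*_ℓ is a (K⁻¹,I)-derivation, A*_r is an (I,K)-derivation, and B*_r is an (I,K⁻¹)-derivation of the free algebra V. -/

import Mathlib

/-!
Both sides of each identity are bilinear in `(u, v)`, so it suffices to check them on pairs of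
words `l`, `m`. Deleting a letter from the word `l ++ m` deletes it either from `l`, leaving `m`
untouched, or from `m`; in the second case the weight of `X*_ℓ` picks up the extra factor
`q^{Σ ⟨lᵢ, x⟩}`, which is exactly the scalar by which `K^{±1}` acts on `l` (dually for `X*_r`).
-/

noncomputable section
namespace SqPaper

/-- The two letters: `0 ↦ A`, `1 ↦ B`. -/
abbrev Ltr := Fin 2
def lA : Ltr := 0
def lB : Ltr := 1

/-- The pairing `⟨ , ⟩` on letters: `⟨A,A⟩=⟨B,B⟩=2`, `⟨A,B⟩=⟨B,A⟩=-2`. -/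
def brk (x y : Ltr) : ℤ := if x = y then 2 else -2

variable (F : Type*) [Field F]

/-- The free algebra `V` on the two generators, realized as the monoid algebra of the
free monoid on two letters; the words form the standard basis. -/
abbrev FA := MonoidAlgebra F (FreeMonoid Ltr)

/-- The standard basis vector attached to a word (list of letters). -/
def wd (l : List Ltr) : FA F := MonoidAlgebra.single (FreeMonoid.ofList l) 1

def Agen : FA F := wd F [lA]
def Bgen : FA F := wd F [lB]

/-- View an element of `V` as a finitely supported function on words. -/
def fsp (v : FA F) : FreeMonoid Ltr →₀ F := v.coeff

/-- The symmetric bilinear form on `V` for which the standard basis of words is orthonormal. -/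
def form (u v : FA F) : F := (fsp F u).sum fun w c => c * (fsp F v) w

/-- Extend a function on words to an `F`-linear map on `V`. -/
def mkMap {M : Type*} [AddCommMonoid M] [Module F M] (f : List Ltr → M) :
    FA F →ₗ[F] M :=
  Finsupp.lsum F (fun w => LinearMap.toSpanSingleton F M (f (FreeMonoid.toList w)))
    ∘ₗ (MonoidAlgebra.coeffLinearEquiv F).toLinearMap

/-- `[3]_q = (q³ - q⁻³)/(q - q⁻¹)`. -/
def tri (q : F) : F := (q ^ 3 - q⁻¹ ^ 3) / (q - q⁻¹)

/-- The q-shuffle product on words. -/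
def shufW (q : F) : List Ltr → List Ltr → FA F
  | [], v => wd F v
  | u, [] => wd F u
  | a :: u, b :: v =>
      wd F [a] * shufW q u (b :: v) +
        (q ^ (((a :: u).map (fun x => brk x b)).sum)) • (wd F [b] * shufW q (a :: u) v)
  termination_by u v => u.length + v.length

/-- The q-shuffle product `⋆` on `V`, as a bilinear map. -/
def qshuf (q : F) : FA F →ₗ[F] FA F →ₗ[F] FA F :=
  mkMap F fun u => mkMap F fun v => shufW F q u v

/-- Iterated `⋆`-product of the letters of a word. -/
def thetaW (q : F) : List Ltr → FA F
  | [] => 1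
  | a :: t => qshuf F q (wd F [a]) (thetaW q t)

/-- `θ : V → V`, the algebra homomorphism from the free algebra to the q-shuffle algebra
with `θ(A) = A`, `θ(B) = B`. -/
def theta (q : F) : FA F →ₗ[F] FA F := mkMap F fun l => thetaW F q l

/-- `A_L`, left multiplication by `A` in the free algebra. -/
def AL : FA F →ₗ[F] FA F := LinearMap.mulLeft F (Agen F)
def BL : FA F →ₗ[F] FA F := LinearMap.mulLeft F (Bgen F)
def AR : FA F →ₗ[F] FA F := LinearMap.mulRight F (Agen F)
def BR : FA F →ₗ[F] FA F := LinearMap.mulRight F (Bgen F)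

/-- `X*_L` (for the letter `x`): deletes the letter `x` from the front of a word. -/
def delL (x : Ltr) : FA F →ₗ[F] FA F :=
  mkMap F fun l => if l.head? = some x then wd F l.tail else 0

/-- `X*_R` (for the letter `x`): deletes the letter `x` from the end of a word. -/
def delR (x : Ltr) : FA F →ₗ[F] FA F :=
  mkMap F fun l => if l.getLast? = some x then wd F l.dropLast else 0

/-- `X_ℓ`: left q-shuffle multiplication by the letter `x`. -/
def shL (q : F) (x : Ltr) : FA F →ₗ[F] FA F := qshuf F q (wd F [x])

/-- `X_r`: right q-shuffle multiplication by the letter `x`. -/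
def shR (q : F) (x : Ltr) : FA F →ₗ[F] FA F := (qshuf F q).flip (wd F [x])

/-- `X*_ℓ`: the weighted deletion map, deleting an occurrence of the letter `x`
with weight `q^{⟨v₁,x⟩+⋯+⟨v_{i-1},x⟩}`. -/
def lowL (q : F) (x : Ltr) : FA F →ₗ[F] FA F :=
  mkMap F fun l =>
    ∑ i ∈ Finset.range l.length,
      if l[i]? = some x then
        (q ^ (((l.take i).map (fun y => brk y x)).sum)) • wd F (l.eraseIdx i)
      else 0

/-- `X*_r`: the weighted deletion map, deleting an occurrence of the letter `x`
with weight `q^{⟨vₙ,x⟩+⋯+⟨v_{i+1},x⟩}`. -/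
def lowR (q : F) (x : Ltr) : FA F →ₗ[F] FA F :=
  mkMap F fun l =>
    ∑ i ∈ Finset.range l.length,
      if l[i]? = some x then
        (q ^ (((l.drop (i + 1)).map (fun y => brk y x)).sum)) • wd F (l.eraseIdx i)
      else 0

/-- `K`, the algebra automorphism of the free algebra `V` with `K(A) = q²A`, `K(B) = q⁻²B`;
on a word `v = v₁⋯vₙ` it acts as `K(v) = v·q^{⟨v₁,A⟩+⋯+⟨vₙ,A⟩}`. -/
def Kop (q : F) : FA F →ₗ[F] FA F :=
  mkMap F fun l => (q ^ ((l.map (fun y => brk y lA)).sum)) • wd F l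

/-- `K⁻¹`; on a word `v = v₁⋯vₙ` it acts as `K⁻¹(v) = v·q^{⟨v₁,B⟩+⋯+⟨vₙ,B⟩}`. -/
def Kinv (q : F) : FA F →ₗ[F] FA F :=
  mkMap F fun l => (q ^ ((l.map (fun y => brk y lB)).sum)) • wd F l

/-- `T`, the automorphism of the free algebra swapping `A` and `B`. -/
def Top : FA F →ₗ[F] FA F :=
  mkMap F fun l => wd F (l.map (fun x => if x = lA then lB else lA))

/-- `Â = Q(A_L − K B_R)` and `B̂ = Q(B_L − K⁻¹ A_R)` where `Q = 1 - q²`. -/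
def hatOp (q : F) (a : Ltr) : FA F →ₗ[F] FA F :=
  if a = lA then (1 - q ^ 2) • (AL F - Kop F q ∘ₗ BR F)
  else (1 - q ^ 2) • (BL F - Kinv F q ∘ₗ AR F)

def phiW (q : F) : List Ltr → FA F
  | [] => 1
  | a :: t => hatOp F q a (phiW q t)

/-- The map `φ`: `φ(1) = 1` and `φ(v₁⋯vₙ) = v̂₁v̂₂⋯v̂ₙ(1)`. -/
def phi (q : F) : FA F →ₗ[F] FA F := mkMap F fun l => phiW F q l

/-- `ψ = K B_R A*_L + K⁻¹ A_R B*_L`. -/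
def psi (q : F) : FA F →ₗ[F] FA F :=
  Kop F q ∘ₗ BR F ∘ₗ delL F lA + Kinv F q ∘ₗ AR F ∘ₗ delL F lB

/-- `V_n`, the span of the words of length `n`. -/
def Vn (n : ℕ) : Submodule F (FA F) :=
  Submodule.span F { x | ∃ l : List Ltr, l.length = n ∧ x = wd F l }

/-- `J⁺ = A³B − [3]_q A²BA + [3]_q ABA² − BA³`. -/
def Jp (q : F) : FA F :=
  Agen F ^ 3 * Bgen F - tri F q • (Agen F ^ 2 * Bgen F * Agen F)
    + tri F q • (Agen F * Bgen F * Agen F ^ 2) - Bgen F * Agen F ^ 3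

/-- `J⁻ = B³A − [3]_q B²AB + [3]_q BAB² − AB³`. -/
def Jm (q : F) : FA F :=
  Bgen F ^ 3 * Agen F - tri F q • (Bgen F ^ 2 * Agen F * Bgen F)
    + tri F q • (Bgen F * Agen F * Bgen F ^ 2) - Agen F * Bgen F ^ 3

/-- `J`, the two-sided ideal of the free algebra generated by `J⁺` and `J⁻`
(realized as the `F`-span of the elements `a·J^±·b`). -/
def Jsub (q : F) : Submodule F (FA F) :=
  Submodule.span F { x | ∃ a b : FA F, x = a * Jp F q * b ∨ x = a * Jm F q * b }

/-- `U`, the subalgebra of the q-shuffle algebra `(V,⋆)` generated by `A` and `B`,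
realized as the span of all `⋆`-products of the letters. -/
def Usub (q : F) : Submodule F (FA F) :=
  Submodule.span F (Set.range fun l : List Ltr => thetaW F q l)

/-- A `□_q`-module structure on an `F`-vector space `M`: four operators
`x₀, x₁, x₂, x₃` (indices mod 4) satisfying the q-Weyl and q-Serre relations. -/
structure SqAct (q : F) (M : Type*) [AddCommGroup M] [Module F M] where
  x : ZMod 4 → Module.End F M
  weyl : ∀ i : ZMod 4,
    q • (x i * x (i + 1)) - q⁻¹ • (x (i + 1) * x i) = (q - q⁻¹) • (1 : Module.End F M)
  serre : ∀ i : ZMod 4,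
    x i ^ 3 * x (i + 2) - tri F q • (x i ^ 2 * x (i + 2) * x i)
      + tri F q • (x i * x (i + 2) * x i ^ 2) - x (i + 2) * x i ^ 3 = 0

variable {F} {q : F} {M : Type*} [AddCommGroup M] [Module F M]

/-- A `□_q`-module `M` is generated by `ξ` if no proper submodule
(subspace invariant under all the `xᵢ`) contains `ξ`. -/
def SqAct.Gen (S : SqAct F q M) (ξ : M) : Prop :=
  ∀ W : Submodule F M, (∀ i : ZMod 4, ∀ m ∈ W, S.x i m ∈ W) → ξ ∈ W → W = ⊤

/-- `W_n`: the span of the vectors `u₁u₂⋯uₙ·ξ` with each `uᵢ ∈ {x₀, x₂}`. -/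
def SqAct.Wn (S : SqAct F q M) (ξ : M) (n : ℕ) : Submodule F M :=
  Submodule.span F
    { m | ∃ l : List (ZMod 4), l.length = n ∧ (∀ i ∈ l, i = 0 ∨ i = 2) ∧
        m = l.foldr (fun i acc => S.x i acc) ξ }

end SqPaper

def IsTwistedDerivation {A : Type*} [Mul A] [Add A] (φ ψ δ : A → A) : Prop :=
  ∀ u v, δ (u * v) = φ u * δ v + δ u * ψ v

theorem MonoidAlgebra.isTwistedDerivation_of_single {k G : Type*} [CommSemiring k] [Monoid G]
    (φ ψ δ : MonoidAlgebra k G →ₗ[k] MonoidAlgebra k G)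
    (h : ∀ a b : G, δ (single a 1 * single b 1) =
      φ (single a 1) * δ (single b 1) + δ (single a 1) * ψ (single b 1)) :
    IsTwistedDerivation φ ψ δ := by
  have key : (LinearMap.mul k _).compr₂ δ =
      (LinearMap.mul k _).compl₁₂ φ δ + (LinearMap.mul k _).compl₁₂ δ ψ := by
    ext a b : 4
    simpa using h a b
  intro u v
  simpa using LinearMap.congr_fun₂ key u v

namespace SqPaper

variable {F : Type*} [Field F]

theorem mkMap_wd {M : Type*} [AddCommMonoid M] [Module F M] (f : List Ltr → M) (l : List Ltr) :
    mkMap F f (wd F l) = f l := by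
  simp [mkMap, wd]

theorem wd_append (l m : List Ltr) : wd F (l ++ m) = wd F l * wd F m := by
  rw [wd, wd, wd, MonoidAlgebra.single_mul_single, one_mul, FreeMonoid.ofList_append]

def wordWeight (q : F) (x : Ltr) (l : List Ltr) : F := q ^ (l.map fun y => brk y x).sum

theorem wordWeight_append {q : F} (hq : q ≠ 0) (x : Ltr) (l m : List Ltr) :
    wordWeight q x (l ++ m) = wordWeight q x l * wordWeight q x m := by
  rw [wordWeight, List.map_append, List.sum_append, zpow_add₀ hq]; rfl

def twist (q : F) (x : Ltr) : FA F →ₗ[F] FA F := mkMap F fun l => wordWeight q x l • wd F l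

theorem twist_lA (q : F) : twist q lA = Kop F q := rfl

theorem twist_lB (q : F) : twist q lB = Kinv F q := rfl

theorem twist_wd (q : F) (x : Ltr) (l : List Ltr) :
    twist q x (wd F l) = wordWeight q x l • wd F l :=
  mkMap_wd _ l

theorem lowL_wd (q : F) (x : Ltr) (l : List Ltr) :
    lowL F q x (wd F l) = ∑ i ∈ Finset.range l.length,
      if l[i]? = some x then wordWeight q x (l.take i) • wd F (l.eraseIdx i) else 0 :=
  mkMap_wd _ l

theorem lowR_wd (q : F) (x : Ltr) (l : List Ltr) :
    lowR F q x (wd F l) = ∑ i ∈ Finset.range l.length,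
      if l[i]? = some x then wordWeight q x (l.drop (i + 1)) • wd F (l.eraseIdx i) else 0 :=
  mkMap_wd _ l

theorem lowL_wd_mul_wd {q : F} (hq : q ≠ 0) (x : Ltr) (l m : List Ltr) :
    lowL F q x (wd F l * wd F m) =
      twist q x (wd F l) * lowL F q x (wd F m) + lowL F q x (wd F l) * wd F m := by
  rw [← wd_append]
  simp only [lowL_wd, twist_wd, List.length_append, Finset.sum_range_add, Finset.mul_sum,
    Finset.sum_mul, add_comm (Finset.sum (Finset.range l.length) _)]
  congr 1
  · refine Finset.sum_congr rfl fun j _ => ?_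
    have h : l.length ≤ l.length + j := Nat.le_add_right _ _
    rw [List.getElem?_append_right h, List.eraseIdx_append_of_length_le h,
      List.take_length_add_append, Nat.add_sub_cancel_left]
    split
    · rw [wordWeight_append hq, wd_append, mul_smul, smul_mul_assoc,
        mul_smul_comm]
    · rw [mul_zero]
  · refine Finset.sum_congr rfl fun i hi => ?_
    have h : i < l.length := Finset.mem_range.mp hi
    rw [List.getElem?_append_left h, List.take_append_of_le_length h.le,
      List.eraseIdx_append_of_lt_length h]
    split
    · rw [smul_mul_assoc, wd_append]
    · rw [zero_mul]

theorem lowR_wd_mul_wd {q : F} (hq : q ≠ 0) (x : Ltr) (l m : List Ltr) :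
    lowR F q x (wd F l * wd F m) =
      wd F l * lowR F q x (wd F m) + lowR F q x (wd F l) * twist q x (wd F m) := by
  rw [← wd_append]
  simp only [lowR_wd, twist_wd, List.length_append, Finset.sum_range_add, Finset.mul_sum,
    Finset.sum_mul, add_comm (Finset.sum (Finset.range l.length) _)]
  congr 1
  · refine Finset.sum_congr rfl fun j _ => ?_
    have h : l.length ≤ l.length + j := Nat.le_add_right _ _
    rw [List.getElem?_append_right h, List.eraseIdx_append_of_length_le h,
      Nat.add_sub_cancel_left, Nat.add_assoc, List.drop_length_add_append]
    split
    · rw [mul_smul_comm, wd_append]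
    · rw [mul_zero]
  · refine Finset.sum_congr rfl fun i hi => ?_
    have h : i < l.length := Finset.mem_range.mp hi
    rw [List.getElem?_append_left h, List.eraseIdx_append_of_lt_length h,
      List.drop_append_of_le_length h]
    split
    · rw [wordWeight_append hq, wd_append, mul_smul, smul_mul_assoc,
        mul_smul_comm, smul_comm]
    · rw [zero_mul]

theorem lowL_isTwistedDerivation {q : F} (hq : q ≠ 0) (x : Ltr) :
    IsTwistedDerivation (twist q x) (LinearMap.id (R := F)) (lowL F q x) :=
  MonoidAlgebra.isTwistedDerivation_of_single _ _ _ fun a b =>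
    lowL_wd_mul_wd hq x a.toList b.toList

theorem lowR_isTwistedDerivation {q : F} (hq : q ≠ 0) (x : Ltr) :
    IsTwistedDerivation (LinearMap.id (R := F)) (twist q x) (lowR F q x) :=
  MonoidAlgebra.isTwistedDerivation_of_single _ _ _ fun a b =>
    lowR_wd_mul_wd hq x a.toList b.toList

end SqPaper

open SqPaper in
theorem low_derivations_free_general (F : Type*) [Field F] (q : F) (hq : q ≠ 0) :
    ∀ u v : FA F,
      lowL F q lA (u * v) = Kop F q u * lowL F q lA v + lowL F q lA u * v ∧
      lowL F q lB (u * v) = Kinv F q u * lowL F q lB v + lowL F q lB u * v ∧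
      lowR F q lA (u * v) = u * lowR F q lA v + lowR F q lA u * Kop F q v ∧
      lowR F q lB (u * v) = u * lowR F q lB v + lowR F q lB u * Kinv F q v := by
  rw [← twist_lA, ← twist_lB]
  exact fun u v => ⟨lowL_isTwistedDerivation hq lA u v, lowL_isTwistedDerivation hq lB u v,
    lowR_isTwistedDerivation hq lA u v, lowR_isTwistedDerivation hq lB u v⟩

open SqPaper in
/-- `A*_ℓ, B*_ℓ, A*_r, B*_r` are twisted derivations of the free algebra `V`:
`A*_ℓ` is a `(K,I)`-derivation, `B*_ℓ` a `(K⁻¹,I)`-derivation, `A*_r` an `(I,K)`-derivation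
and `B*_r` an `(I,K⁻¹)`-derivation. -/
theorem low_derivations_free (F : Type*) [Field F] (q : F) (hq : q ≠ 0)
    (hq1 : ∀ k : ℕ, 0 < k → q ^ k ≠ 1) :
    ∀ u v : FA F,
      lowL F q lA (u * v) = Kop F q u * lowL F q lA v + lowL F q lA u * v ∧
      lowL F q lB (u * v) = Kinv F q u * lowL F q lB v + lowL F q lB u * v ∧
      lowR F q lA (u * v) = u * lowR F q lA v + lowR F q lA u * Kop F q v ∧
      lowR F q lB (u * v) = u * lowR F q lB v + lowR F q lB u * Kinv F q v :=
  low_derivations_free_general F q hq
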